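/- arXiv:1608.04562 — 7 statements merged into one kernel-verified Lean document; each statement's English description precedes it below -/
import Mathlib

section
/- Let F be any field and m and n arbitrary positive integers. Then there exists an F-subalgebra R of M_n(F) that is Lie nilpotent of index m and satisfies dim_F R = M(m+1, n). -/
/-- The left-normed iterated commutator `[x₁,…,x_k]*`. -/
def lieComm {R : Type*} [Ring R] (x : R) (xs : List R) : R :=
  xs.foldl (fun a b => a * b - b * a) x

/-- A ring is Lie nilpotent of index `m` if all left-normed commutators
of `m+1` elements vanish. -/
def IsLieNilpotentOfIndex (R : Type*) [Ring R] (m : ℕ) : Prop :=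
  ∀ (x : R) (xs : List R), xs.length = m → lieComm x xs = 0

/-- The set of values `(n² − Σ kᵢ²)/2 + 1` over tuples of nonnegative
integers summing to `n`; `M(ℓ,n)` is its greatest element. -/
def MSet (ℓ n : ℕ) : Set ℤ :=
  {d | ∃ k : Fin ℓ → ℕ, (∑ i, k i) = n ∧
    2 * (d - 1) = (n : ℤ) ^ 2 - ∑ i, ((k i : ℤ)) ^ 2}

set_option maxHeartbeats 1000000
set_option synthInstance.maxHeartbeats 1000000

section Aux

variable {F : Type*} [Field F] {n : ℕ}

/-- `A` is supported on pairs `(p,q)` with `g p + j ≤ g q`. -/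
def inN (g : Fin n → ℕ) (j : ℕ) (A : Matrix (Fin n) (Fin n) F) : Prop :=
  ∀ p q, A p q ≠ 0 → g p + j ≤ g q

lemma inN_mono {g : Fin n → ℕ} {j j' : ℕ} (h : j' ≤ j) {A : Matrix (Fin n) (Fin n) F}
    (hA : inN g j A) : inN g j' A := fun p q hpq => by have := hA p q hpq; omega

lemma inN_zero (g : Fin n → ℕ) (j : ℕ) : inN g j (0 : Matrix (Fin n) (Fin n) F) :=
  fun _ _ h => absurd rfl h

lemma inN_add {g : Fin n → ℕ} {j : ℕ} {A B : Matrix (Fin n) (Fin n) F}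
    (hA : inN g j A) (hB : inN g j B) : inN g j (A + B) := by
  intro p q h
  by_cases h1 : A p q = 0
  · exact hB p q (by simpa [Matrix.add_apply, h1] using h)
  · exact hA p q h1

lemma inN_sub {g : Fin n → ℕ} {j : ℕ} {A B : Matrix (Fin n) (Fin n) F}
    (hA : inN g j A) (hB : inN g j B) : inN g j (A - B) := by
  intro p q h
  by_cases h1 : A p q = 0
  · refine hB p q fun hh => h ?_
    simp [Matrix.sub_apply, h1, hh]
  · exact hA p q h1

lemma inN_smul {g : Fin n → ℕ} {j : ℕ} {A : Matrix (Fin n) (Fin n) F} (c : F)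
    (hA : inN g j A) : inN g j (c • A) := by
  intro p q h
  exact hA p q (fun hh => h (by simp [Matrix.smul_apply, hh]))

lemma inN_mul {g : Fin n → ℕ} {j j' : ℕ} {A B : Matrix (Fin n) (Fin n) F}
    (hA : inN g j A) (hB : inN g j' B) : inN g (j + j') (A * B) := by
  intro p q h
  rw [Matrix.mul_apply] at h
  obtain ⟨r, -, hr⟩ := Finset.exists_ne_zero_of_sum_ne_zero h
  have h1 : A p r ≠ 0 := fun hh => hr (by simp [hh])
  have h2 : B r q ≠ 0 := fun hh => hr (by simp [hh])
  have := hA p r h1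
  have := hB r q h2
  omega

lemma inN_eq_zero {g : Fin n → ℕ} {m : ℕ} (hg : ∀ x, g x ≤ m)
    {A : Matrix (Fin n) (Fin n) F} (hA : inN g (m + 1) A) : A = 0 := by
  ext p q
  by_contra h
  have := hA p q h
  have := hg p
  have := hg q
  simp only [Matrix.zero_apply] at h
  omega

/-- Scalars plus strictly block upper triangular matrices. -/
def blockAlg (g : Fin n → ℕ) : Subalgebra F (Matrix (Fin n) (Fin n) F) where
  carrier := {A | ∃ c : F, inN g 1 (A - c • 1)}
  zero_mem' := ⟨0, by simpa using inN_zero g 1⟩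
  one_mem' := ⟨1, by simpa using inN_zero g 1⟩
  add_mem' := by
    rintro A B ⟨c, hc⟩ ⟨d, hd⟩
    exact ⟨c + d, by
      have : A + B - (c + d) • (1 : Matrix (Fin n) (Fin n) F)
          = (A - c • 1) + (B - d • 1) := by rw [add_smul]; abel
      rw [this]; exact inN_add hc hd⟩
  mul_mem' := by
    rintro A B ⟨c, hc⟩ ⟨d, hd⟩
    refine ⟨c * d, ?_⟩
    have key : A * B - (c * d) • (1 : Matrix (Fin n) (Fin n) F)
        = (A - c • 1) * (B - d • 1) + c • (B - d • 1) + d • (A - c • 1) := by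
      simp only [Matrix.sub_mul, Matrix.mul_sub, Matrix.smul_mul, Matrix.mul_smul,
        smul_sub, mul_one, one_mul, smul_smul]
      rw [mul_comm d c]
      abel
    rw [key]
    exact inN_add (inN_add (inN_mono (by norm_num) (inN_mul hc hd)) (inN_smul c hd))
      (inN_smul d hc)
  algebraMap_mem' := fun r =>
    ⟨r, by simpa [Algebra.algebraMap_eq_smul_one] using inN_zero g 1⟩

lemma blockAlg_diag {g : Fin n → ℕ} {A : Matrix (Fin n) (Fin n) F} {c : F}
    (hc : inN g 1 (A - c • 1)) (p : Fin n) : A p p = c := by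
  by_contra h
  have h0 : (A - c • (1 : Matrix (Fin n) (Fin n) F)) p p ≠ 0 := by
    simp only [Matrix.sub_apply, Matrix.smul_apply, Matrix.one_apply_eq, smul_eq_mul, mul_one]
    exact sub_ne_zero_of_ne h
  have := hc p p h0
  omega

lemma blockAlg_off {g : Fin n → ℕ} {A : Matrix (Fin n) (Fin n) F} {c : F}
    (hc : inN g 1 (A - c • 1)) {p q : Fin n} (hne : p ≠ q) (hlt : ¬ g p < g q) :
    A p q = 0 := by
  by_contra h
  have h0 : (A - c • (1 : Matrix (Fin n) (Fin n) F)) p q ≠ 0 := by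
    simpa [Matrix.sub_apply, Matrix.one_apply_ne hne] using h
  have := hc p q h0
  omega

lemma comm_inN {g : Fin n → ℕ} {j : ℕ} {U A : Matrix (Fin n) (Fin n) F}
    (hU : inN g j U) (hA : A ∈ blockAlg (F := F) g) :
    inN g (j + 1) (U * A - A * U) := by
  obtain ⟨c, hc⟩ := hA
  have key : U * A - A * U = U * (A - c • 1) - (A - c • 1) * U := by
    simp only [Matrix.mul_sub, Matrix.sub_mul, Matrix.mul_smul, Matrix.smul_mul,
      mul_one, one_mul]
    abel
  rw [key]
  exact inN_sub (inN_mul hU hc) (by simpa [Nat.add_comm] using inN_mul hc hU)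

lemma comm2_inN {g : Fin n → ℕ} {A B : Matrix (Fin n) (Fin n) F}
    (hA : A ∈ blockAlg (F := F) g) (hB : B ∈ blockAlg (F := F) g) :
    inN g 2 (A * B - B * A) := by
  obtain ⟨c, hc⟩ := hA
  have key : A * B - B * A = (A - c • 1) * B - B * (A - c • 1) := by
    simp only [Matrix.mul_sub, Matrix.sub_mul, Matrix.mul_smul, Matrix.smul_mul,
      mul_one, one_mul]
    abel
  rw [key]
  exact comm_inN hc hB

lemma foldl_inN {g : Fin n → ℕ} :
    ∀ (xs : List (Matrix (Fin n) (Fin n) F)), (∀ A ∈ xs, A ∈ blockAlg (F := F) g) →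
    ∀ (j : ℕ) (U : Matrix (Fin n) (Fin n) F), inN g j U →
    inN g (j + xs.length) (xs.foldl (fun a b => a * b - b * a) U) := by
  intro xs
  induction xs with
  | nil => intro _ j U hU; simpa using hU
  | cons y ys ih =>
    intro hmem j U hU
    simp only [List.foldl_cons, List.length_cons]
    have h1 : inN g (j + 1) (U * y - y * U) := comm_inN hU (hmem y (by simp))
    have := ih (fun A hA => hmem A (by simp [hA])) (j + 1) _ h1
    have heq : j + 1 + ys.length = j + (ys.length + 1) := by omega
    rwa [heq] at this

lemma map_lieComm {R S : Type*} [Ring R] [Ring S] (φ : R →+* S) (x : R) (xs : List R) :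
    φ (lieComm x xs) = lieComm (φ x) (xs.map φ) := by
  induction xs generalizing x with
  | nil => rfl
  | cons y ys ih =>
    simp only [lieComm, List.foldl_cons, List.map_cons] at *
    rw [ih (x * y - y * x)]
    simp [map_sub, map_mul]

lemma blockAlg_lieNilpotent {g : Fin n → ℕ} {m : ℕ} (hg : ∀ x, g x ≤ m) (hm : 0 < m) :
    IsLieNilpotentOfIndex ↥(blockAlg (F := F) g) m := by
  intro x xs hlen
  apply Subtype.ext
  have hcoe : ((lieComm x xs : ↥(blockAlg (F := F) g)) : Matrix (Fin n) (Fin n) F)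
      = lieComm (x : Matrix (Fin n) (Fin n) F)
          (xs.map (fun z : ↥(blockAlg (F := F) g) => (z : Matrix (Fin n) (Fin n) F))) := by
    simpa using map_lieComm ((blockAlg (F := F) g).val.toRingHom) x xs
  rw [ZeroMemClass.coe_zero, hcoe]
  cases xs with
  | nil => simp at hlen; omega
  | cons y ys =>
    simp only [List.map_cons, lieComm, List.foldl_cons]
    have h2 : inN g 2
        ((x : Matrix (Fin n) (Fin n) F) * (y : Matrix (Fin n) (Fin n) F)
          - (y : Matrix (Fin n) (Fin n) F) * (x : Matrix (Fin n) (Fin n) F)) :=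
      comm2_inN x.2 y.2
    have hmem : ∀ A ∈ ys.map (fun z : ↥(blockAlg (F := F) g) =>
        (z : Matrix (Fin n) (Fin n) F)), A ∈ blockAlg (F := F) g := by
      intro A hA
      obtain ⟨z, -, rfl⟩ := List.mem_map.mp hA
      exact z.2
    have := foldl_inN _ hmem 2 _ h2
    have hlen' : ys.length = m - 1 := by simp at hlen; omega
    rw [List.length_map, hlen'] at this
    have h3 : 2 + (m - 1) = m + 1 := by omega
    rw [h3] at this
    exact inN_eq_zero hg this

/-- The linear "coordinates" of a member of `blockAlg g`. -/
def dimMap (g : Fin n → ℕ) (i0 : Fin n) :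
    ↥(blockAlg (F := F) g) →ₗ[F] F × ({p : Fin n × Fin n // g p.1 < g p.2} → F) where
  toFun A := ((A : Matrix (Fin n) (Fin n) F) i0 i0,
    fun t => (A : Matrix (Fin n) (Fin n) F) t.1.1 t.1.2)
  map_add' A B := by ext <;> simp [Matrix.add_apply]
  map_smul' c A := by ext <;> simp [Matrix.smul_apply]

lemma dimMap_injective (g : Fin n → ℕ) (i0 : Fin n) :
    Function.Injective (dimMap (F := F) g i0) := by
  intro A B h
  obtain ⟨c, hc⟩ := A.2
  obtain ⟨d, hd⟩ := B.2
  have h1 : (A : Matrix (Fin n) (Fin n) F) i0 i0 = (B : Matrix (Fin n) (Fin n) F) i0 i0 :=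
    congrArg Prod.fst h
  have h2 := congrArg Prod.snd h
  apply Subtype.ext
  ext p q
  by_cases hpq : p = q
  · subst hpq
    rw [blockAlg_diag hc, blockAlg_diag hd]
    rw [blockAlg_diag hc i0, blockAlg_diag hd i0] at h1
    exact h1
  · by_cases hlt : g p < g q
    · exact congrFun h2 ⟨(p, q), hlt⟩
    · rw [blockAlg_off hc hpq hlt, blockAlg_off hd hpq hlt]

lemma dimMap_surjective (g : Fin n → ℕ) (i0 : Fin n) :
    Function.Surjective (dimMap (F := F) g i0) := by
  classical
  rintro ⟨c, h⟩
  refine ⟨⟨Matrix.of (fun p q => if hpq : g p < g q then h ⟨(p, q), hpq⟩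
    else if p = q then c else 0), ⟨c, ?_⟩⟩, ?_⟩
  · intro p q hne
    by_cases hpq : g p < g q
    · omega
    · exfalso
      apply hne
      simp only [Matrix.sub_apply, Matrix.smul_apply, Matrix.of_apply, dif_neg hpq,
        smul_eq_mul, mul_one]
      by_cases hpq' : p = q
      · subst hpq'
        simp [Matrix.one_apply_eq]
      · simp [hpq', Matrix.one_apply_ne hpq']
  · refine Prod.ext ?_ (funext fun t => ?_)
    · simp [dimMap]
    · obtain ⟨⟨p, q⟩, hpq⟩ := t
      simp only [dimMap, LinearMap.coe_mk, AddHom.coe_mk, Matrix.of_apply]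
      rw [dif_pos hpq]

lemma finrank_blockAlg (g : Fin n → ℕ) (hn : 0 < n) :
    Module.finrank F ↥(blockAlg (F := F) g)
      = 1 + Fintype.card {p : Fin n × Fin n // g p.1 < g p.2} := by
  classical
  let i0 : Fin n := ⟨0, hn⟩
  let e := LinearEquiv.ofBijective (dimMap (F := F) g i0)
    ⟨dimMap_injective g i0, dimMap_surjective g i0⟩
  rw [e.finrank_eq, Module.finrank_prod, Module.finrank_self, Module.finrank_pi]

lemma count_pairs {ℓ : ℕ} (f : Fin n → Fin ℓ) :
    2 * Fintype.card {p : Fin n × Fin n // (f p.1 : ℕ) < (f p.2 : ℕ)}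
      + ∑ a : Fin ℓ, ((Finset.univ.filter (fun x => f x = a)).card) ^ 2 = n * n := by
  classical
  rw [Fintype.card_subtype]
  set L := Finset.univ.filter (fun p : Fin n × Fin n => (f p.1 : ℕ) < (f p.2 : ℕ)) with hL
  set Lc := Finset.univ.filter (fun p : Fin n × Fin n => ¬ (f p.1 : ℕ) < (f p.2 : ℕ)) with hLc
  set Gr := Finset.univ.filter (fun p : Fin n × Fin n => (f p.2 : ℕ) < (f p.1 : ℕ)) with hGr
  set E := Finset.univ.filter (fun p : Fin n × Fin n => f p.1 = f p.2) with hE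
  have h1 : L.card + Lc.card = n * n := by
    rw [hL, hLc, Finset.card_filter_add_card_filter_not]
    simp
  have h2 : Gr.card + E.card = Lc.card := by
    have hs1 : Lc.filter (fun p : Fin n × Fin n => (f p.2 : ℕ) < (f p.1 : ℕ)) = Gr := by
      ext p
      simp only [hLc, hGr, Finset.filter_filter, Finset.mem_filter, Finset.mem_univ, true_and]
      omega
    have hs2 : Lc.filter (fun p : Fin n × Fin n => ¬ (f p.2 : ℕ) < (f p.1 : ℕ)) = E := by
      ext p
      simp only [hLc, hE, Finset.filter_filter, Finset.mem_filter, Finset.mem_univ, true_and,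
        Fin.ext_iff]
      omega
    rw [← Finset.card_filter_add_card_filter_not
      (s := Lc) (p := fun p : Fin n × Fin n => (f p.2 : ℕ) < (f p.1 : ℕ)), hs1, hs2]
  have h3 : Gr.card = L.card := by
    refine Finset.card_bij' (fun p _ => p.swap) (fun p _ => p.swap) ?_ ?_ ?_ ?_
    · intro p hp
      simp only [hGr, Finset.mem_filter, Finset.mem_univ, true_and] at hp
      simpa only [hL, Finset.mem_filter, Finset.mem_univ, true_and, Prod.fst_swap,
        Prod.snd_swap] using hp
    · intro p hp
      simp only [hL, Finset.mem_filter, Finset.mem_univ, true_and] at hp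
      simpa only [hGr, Finset.mem_filter, Finset.mem_univ, true_and, Prod.fst_swap,
        Prod.snd_swap] using hp
    · intro p _; exact Prod.swap_swap p
    · intro p _; exact Prod.swap_swap p
  have h4 : E.card = ∑ a : Fin ℓ, ((Finset.univ.filter (fun x => f x = a)).card) ^ 2 := by
    rw [Finset.card_eq_sum_card_fiberwise (f := fun p : Fin n × Fin n => f p.1)
      (t := Finset.univ) (fun x _ => Finset.mem_univ _)]
    refine Finset.sum_congr rfl fun a _ => ?_
    have heq : E.filter (fun p : Fin n × Fin n => f p.1 = a)
        = (Finset.univ.filter (fun x => f x = a)) ×ˢ (Finset.univ.filter (fun x => f x = a)) := by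
      ext p
      simp only [hE, Finset.filter_filter, Finset.mem_filter, Finset.mem_univ, true_and,
        Finset.mem_product]
      constructor
      · rintro ⟨hq, ha⟩; exact ⟨ha, hq ▸ ha⟩
      · rintro ⟨ha1, ha2⟩; exact ⟨ha1.trans ha2.symm, ha1⟩
    rw [heq, Finset.card_product, sq]
  omega

end Aux

theorem stmt1 (F : Type*) [Field F] (m n : ℕ) (hm : 0 < m) (hn : 0 < n)
    (M : ℤ) (hM : IsGreatest (MSet (m + 1) n) M) :
    ∃ R : Subalgebra F (Matrix (Fin n) (Fin n) F),
      IsLieNilpotentOfIndex ↥R m ∧ (Module.finrank F ↥R : ℤ) = M := by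
  classical
  obtain ⟨k, hk, hMeq⟩ := hM.1
  have hcard : Fintype.card (Σ i : Fin (m + 1), Fin (k i)) = Fintype.card (Fin n) := by
    simp [Fintype.card_sigma, hk]
  let e := Fintype.equivOfCardEq hcard
  let f : Fin n → Fin (m + 1) := fun x => (e.symm x).1
  let g : Fin n → ℕ := fun x => (f x : ℕ)
  have hg : ∀ x, g x ≤ m := fun x => Nat.lt_succ_iff.mp (f x).isLt
  refine ⟨blockAlg (F := F) g, blockAlg_lieNilpotent hg hm, ?_⟩
  have hfib : ∀ a : Fin (m + 1), (Finset.univ.filter (fun x => f x = a)).card = k a := by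
    intro a
    rw [← Fintype.card_subtype]
    have e1 : {x : Fin n // f x = a} ≃ {s : Σ i : Fin (m + 1), Fin (k i) // s.1 = a} :=
      Equiv.subtypeEquiv e.symm (fun _ => Iff.rfl)
    have e2 : {s : Σ i : Fin (m + 1), Fin (k i) // s.1 = a} ≃ Fin (k a) :=
      { toFun := fun s => Fin.cast (congrArg k s.2) s.1.2
        invFun := fun t => ⟨⟨a, t⟩, rfl⟩
        left_inv := by rintro ⟨⟨a', t⟩, rfl⟩; rfl
        right_inv := fun t => rfl }
    rw [Fintype.card_congr (e1.trans e2), Fintype.card_fin]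
  have hcount := count_pairs f
  simp only [hfib] at hcount
  rw [finrank_blockAlg g hn]
  have hcountZ : (2 : ℤ) * (Fintype.card {p : Fin n × Fin n // g p.1 < g p.2} : ℤ)
      + ∑ a : Fin (m + 1), ((k a : ℤ)) ^ 2 = (n : ℤ) * n := by
    exact_mod_cast congrArg (Nat.cast : ℕ → ℤ) hcount
  push_cast
  nlinarith [hMeq, hcountZ]
end

section
/- Let R be a ring (associative, with identity) satisfying the Engel condition of index m for some positive integer m. Then every idempotent of R is central: if e ∈ R satisfies e² = e, then ea = ae for all a ∈ R. -/
lemma lieComm_cons {R : Type*} [Ring R] (x y : R) (l : List R) :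
    lieComm x (y :: l) = lieComm (x * y - y * x) l := rfl

lemma lieComm_left {R : Type*} [Ring R] (e : R) (n : ℕ) :
    ∀ x : R, x * e = 0 → e * x = x →
      lieComm x (List.replicate n e) = (-1 : R) ^ n * x := by
  induction n with
  | zero => intro x _ _; simp [lieComm]
  | succ n ih =>
    intro x hxe hex
    rw [List.replicate_succ, lieComm_cons, hxe, hex, zero_sub]
    rw [ih (-x) (by simp [hxe]) (by simp [hex])]
    rw [mul_neg, pow_add, pow_one, mul_assoc, neg_one_mul, mul_neg]

lemma lieComm_right {R : Type*} [Ring R] (e : R) (n : ℕ) :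
    ∀ x : R, x * e = x → e * x = 0 →
      lieComm x (List.replicate n e) = x := by
  induction n with
  | zero => intro x _ _; simp [lieComm]
  | succ n ih =>
    intro x hxe hex
    rw [List.replicate_succ, lieComm_cons, hxe, hex, sub_zero]
    exact ih x hxe hex

theorem stmt4 (R : Type*) [Ring R] (m : ℕ) (hm : 0 < m)
    (hEngel : ∀ x y : R, lieComm x (List.replicate m y) = 0)
    (e : R) (he : e ^ 2 = e) (a : R) : e * a = a * e := by
  have he' : e * e = e := by rw [← pow_two]; exact he
  -- u = e*a - e*a*e
  set u : R := e * a - e * a * e with hu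
  have hue : u * e = 0 := by
    simp only [hu, sub_mul, mul_assoc, he']
    exact sub_self _
  have heu : e * u = u := by
    simp only [hu, mul_sub, ← mul_assoc, he']
  have hu0 : u = 0 := by
    have h := hEngel u e
    rw [lieComm_left e m u hue heu] at h
    have h2 := congrArg (fun z => (-1 : R) ^ m * z) h
    simp only [← mul_assoc, ← pow_add, mul_zero] at h2
    rwa [Even.neg_one_pow ⟨m, rfl⟩, one_mul] at h2
  -- v = a*e - e*a*e
  set v : R := a * e - e * a * e with hv
  have hve : v * e = v := by
    rw [hv, sub_mul, mul_assoc a e e, he', mul_assoc (e*a) e e, he']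
  have hev : e * v = 0 := by
    simp only [hv, mul_sub, ← mul_assoc, he']
    exact sub_self _
  have hv0 : v = 0 := by
    have h := hEngel v e
    rwa [lieComm_right e m v hve hev] at h
  exact (sub_eq_zero.mp hu0).trans (sub_eq_zero.mp hv0).symm
end

section
/- Let F be a field, n a positive integer, R an F-subalgebra of U_n^*(F), and V a faithful right R-module that is finite dimensional over F with d = dim_F V. Then dim_F R ≤ M(d, d) = (1/2)(d² − d) + 1. -/
/-- The set of upper triangular `n × n` matrices with constant main diagonal. -/
def UStarSet (F : Type*) [Field F] (n : ℕ) : Set (Matrix (Fin n) (Fin n) F) :=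
  {A | (∀ i j : Fin n, j < i → A i j = 0) ∧ ∀ i j : Fin n, A i i = A j j}

open Module Submodule

theorem two_mul_sum_mul_add_le_sq {m : ℕ} (u c : ℕ → ℕ) (h : ∀ k, u k = c k + u (k + 1))
    (hm : u m = 0) : 2 * ∑ k ∈ Finset.range m, c k * u (k + 1) + u 0 ≤ u 0 ^ 2 := by
  induction m generalizing u c with
  | zero => simp [hm]
  | succ m ih =>
    have hrest := ih (fun k => u (k + 1)) (fun k => c (k + 1)) (fun k => h (k + 1)) hm
    have hc : c 0 ≤ c 0 ^ 2 := Nat.le_self_pow two_ne_zero _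
    rw [Finset.sum_range_succ', h 0]
    nlinarith

namespace Matrix

variable (α : Type*) [CommSemiring α] (n : ℕ)

def vanishingBelowSuperdiag (k : ℕ) : Submodule α (Matrix (Fin n) (Fin n) α) where
  carrier := {A | ∀ i j : Fin n, (j : ℕ) < i + k → A i j = 0}
  add_mem' ha hb i j hij := by simp [ha i j hij, hb i j hij]
  zero_mem' _ _ _ := rfl
  smul_mem' c _ ha i j hij := by simp [ha i j hij]

variable {α n}

theorem vanishingBelowSuperdiag_mul_le (k l : ℕ) :
    vanishingBelowSuperdiag α n k * vanishingBelowSuperdiag α n l ≤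
      vanishingBelowSuperdiag α n (k + l) := by
  refine mul_le.mpr fun A hA B hB i j hij => ?_
  refine (mul_apply ..).trans (Finset.sum_eq_zero fun p _ => ?_)
  rcases lt_or_ge (p : ℕ) (i + k) with hp | hp
  · rw [hA i p hp, zero_mul]
  · rw [hB p j (by omega), mul_zero]

theorem one_mem_vanishingBelowSuperdiag_zero : 1 ∈ vanishingBelowSuperdiag α n 0 :=
  fun _ _ hij => one_apply_ne (fun h => by subst h; omega)

theorem vanishingBelowSuperdiag_one_pow_le (k : ℕ) :
    vanishingBelowSuperdiag α n 1 ^ k ≤ vanishingBelowSuperdiag α n k := by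
  induction k with
  | zero => exact one_le.mpr one_mem_vanishingBelowSuperdiag_zero
  | succ k ih => exact (mul_le_mul' ih le_rfl).trans (vanishingBelowSuperdiag_mul_le k 1)

theorem vanishingBelowSuperdiag_one_pow_eq_bot : vanishingBelowSuperdiag α n 1 ^ n = ⊥ :=
  eq_bot_iff.mpr <| (vanishingBelowSuperdiag_one_pow_le n).trans fun A hA =>
    (mem_bot α).mpr <| ext fun i j => hA i j (by omega)

end Matrix

section FlagLowering

variable {K V : Type*} [CommSemiring K] [AddCommMonoid V] [Module K V]

def flagLowering (U : ℕ → Submodule K V) : Submodule K (Module.End K V) where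
  carrier := {f | ∀ k, ∀ v ∈ U k, f v ∈ U (k + 1)}
  add_mem' hf hg k v hv := add_mem (hf k v hv) (hg k v hv)
  zero_mem' _ _ _ := zero_mem _
  smul_mem' c _ hf k v hv := smul_mem _ c (hf k v hv)

theorem LinearMap.eq_zero_of_forall_mem_steps {W : Type*} [AddCommMonoid W] [Module K W]
    {U C : ℕ → Submodule K V} {m : ℕ} (hC : ∀ k, U (k + 1) ⊔ C k = U k) (h0 : U 0 = ⊤)
    (hm : U m = ⊥) {f : V →ₗ[K] W} (hf : ∀ k < m, ∀ v ∈ C k, f v = 0) : f = 0 := by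
  have key : ∀ k ≤ m, ∀ v ∈ U k, f v = 0 := by
    intro k hk
    induction hk using Nat.decreasingInduction with
    | self => intro v hv; rw [hm, mem_bot] at hv; rw [hv, map_zero]
    | of_succ k hk ih =>
      intro v hv
      rw [← hC k] at hv
      obtain ⟨y, hy, z, hz, rfl⟩ := mem_sup.mp hv
      rw [map_add, ih y hy, hf k hk z hz, add_zero]
  exact LinearMap.ext fun v => key 0 (Nat.zero_le m) v (h0 ▸ mem_top)

end FlagLowering

section FlagDimension

variable {F V : Type*} [Field F] [AddCommGroup V] [Module F V]

theorem finrank_flagLowering_le [FiniteDimensional F V] {U C : ℕ → Submodule F V} {m : ℕ}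
    (hC : ∀ k, U (k + 1) ⊔ C k = U k) (h0 : U 0 = ⊤) (hm : U m = ⊥) :
    finrank F (flagLowering U) ≤
      ∑ k ∈ Finset.range m, finrank F (C k) * finrank F (U (k + 1)) := by
  have hCU k : C k ≤ U k := hC k ▸ le_sup_right
  let restrictions : flagLowering U →ₗ[F] ((k : Fin m) → C k →ₗ[F] U (k + 1)) :=
    { toFun f k := (f : Module.End F V).restrict fun v hv => f.2 k v (hCU k hv)
      map_add' _ _ := rfl
      map_smul' _ _ := rfl }
  have hinj : Function.Injective restrictions := by
    refine LinearMap.ker_eq_bot.mp (eq_bot_iff.mpr fun f hf => (mem_bot F).mpr ?_)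
    refine Subtype.ext (LinearMap.eq_zero_of_forall_mem_steps hC h0 hm fun k hk v hv => ?_)
    exact congrArg Subtype.val (LinearMap.congr_fun (congrFun hf ⟨k, hk⟩) ⟨v, hv⟩)
  calc finrank F (flagLowering U)
      ≤ ∑ k : Fin m, finrank F (C k →ₗ[F] U (k + 1)) := by
        simpa only [finrank_pi_fintype] using LinearMap.finrank_le_finrank_of_injective hinj
    _ = ∑ k ∈ Finset.range m, finrank F (C k) * finrank F (U (k + 1)) := by
        simp only [finrank_linearMap]
        exact Fin.sum_univ_eq_sum_range (fun k => finrank F (C k) * finrank F (U (k + 1))) m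

theorem two_mul_finrank_flagLowering_add_le_sq [FiniteDimensional F V] {U : ℕ → Submodule F V}
    {m : ℕ} (hU : Antitone U) (h0 : U 0 = ⊤) (hm : U m = ⊥) :
    2 * finrank F (flagLowering U) + finrank F V ≤ finrank F V ^ 2 := by
  choose C hCdisj hC using fun k : ℕ => IsModularLattice.exists_disjoint_and_sup_eq (hU k.le_succ)
  have hsplit k : finrank F (U k) = finrank F (C k) + finrank F (U (k + 1)) := by
    have := finrank_sup_add_finrank_inf_eq (U (k + 1)) (C k)
    rw [hC k, (hCdisj k).eq_bot, finrank_bot] at this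
    omega
  have hbound := two_mul_sum_mul_add_le_sq _ _ hsplit (by rw [hm, finrank_bot])
  rw [h0, finrank_top] at hbound
  have := finrank_flagLowering_le hC h0 hm
  omega

end FlagDimension

section PowSMulTop

variable {K A V : Type*} [CommSemiring K] [Semiring A] [Algebra K A] [AddCommMonoid V]
  [Module K V] [Module A V] [IsScalarTower K A V]

theorem antitone_pow_smul_top (N : Submodule K A) :
    Antitone fun k => N ^ k • (⊤ : Submodule K V) :=
  antitone_nat_of_succ_le fun k => by
    rw [pow_succ]
    exact (Submodule.smul_assoc (N ^ k) N ⊤).le.trans (smul_mono le_rfl le_top)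

theorem lsmul_mem_flagLowering {N : Submodule K A} {a : A} (ha : a ∈ N) :
    Algebra.lsmul K K V a ∈ flagLowering fun k => N ^ k • (⊤ : Submodule K V) := by
  intro k v hv
  have hsucc : N ^ (k + 1) • (⊤ : Submodule K V) = N • N ^ k • ⊤ := by
    rw [pow_succ']
    exact Submodule.smul_assoc N (N ^ k) ⊤
  change a • v ∈ N ^ (k + 1) • (⊤ : Submodule K V)
  rw [hsucc]
  exact smul_mem_smul ha hv

end PowSMulTop

section Nilpotent

variable {F A V : Type*} [Field F] [Semiring A] [Algebra F A] [AddCommGroup V] [Module F V]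
  [Module A V] [IsScalarTower F A V]

theorem two_mul_finrank_add_le_sq_of_pow_eq_bot [FiniteDimensional F V] [FaithfulSMul A V]
    {N : Submodule F A} {m : ℕ} (hN : N ^ m = ⊥) :
    2 * finrank F N + finrank F V ≤ finrank F V ^ 2 := by
  let act : N →ₗ[F] flagLowering fun k => N ^ k • (⊤ : Submodule F V) :=
    LinearMap.codRestrict _ ((Algebra.lsmul F F V).toLinearMap ∘ₗ N.subtype)
      fun a => lsmul_mem_flagLowering a.2
  have hinj : Function.Injective act := fun a b hab => Subtype.ext <|
    FaithfulSMul.eq_of_smul_eq_smul fun v => LinearMap.congr_fun (congrArg Subtype.val hab) v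
  have hflag := two_mul_finrank_flagLowering_add_le_sq (antitone_pow_smul_top N)
    (by rw [pow_zero, Submodule.one_smul])
    (by rw [hN, bot_smul] : N ^ m • (⊤ : Submodule F V) = ⊥)
  have := LinearMap.finrank_le_finrank_of_injective hinj
  omega

end Nilpotent

theorem MSet_two_mul_sub_one_le {ℓ d : ℕ} {x : ℤ} (hx : x ∈ MSet ℓ d) :
    2 * (x - 1) ≤ (d : ℤ) ^ 2 - d := by
  obtain ⟨k, hsum, hx⟩ := hx
  have : (d : ℤ) ≤ ∑ i, (k i : ℤ) ^ 2 := by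
    rw [← hsum, Nat.cast_sum]
    exact Finset.sum_le_sum fun i _ => by exact_mod_cast Nat.le_self_pow two_ne_zero (k i)
  linarith

theorem exists_mem_MSet_self (d : ℕ) : ∃ x ∈ MSet d d, 2 * (x - 1) = (d : ℤ) ^ 2 - d := by
  obtain ⟨c, hc⟩ := Int.even_mul_pred_self d
  refine ⟨c + 1, ⟨fun _ => 1, by simp, ?_⟩, by linarith⟩
  simp only [add_sub_cancel_right, Nat.cast_one, one_pow, Finset.sum_const, Finset.card_univ,
    Fintype.card_fin, Int.nsmul_eq_mul, mul_one]
  linarith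

theorem two_mul_sub_one_eq_of_isGreatest_MSet {d : ℕ} {M : ℤ} (hM : IsGreatest (MSet d d) M) :
    2 * (M - 1) = (d : ℤ) ^ 2 - d := by
  obtain ⟨x, hx, hxd⟩ := exists_mem_MSet_self d
  linarith [MSet_two_mul_sub_one_le hM.1, hM.2 hx]

section UStar

variable {F : Type*} [Field F] {n : ℕ}

def diagEntry (hn : 0 < n) (R : Subalgebra F (Matrix (Fin n) (Fin n) F)) : R →ₗ[F] F :=
  Matrix.entryLinearMap F F ⟨0, hn⟩ ⟨0, hn⟩ ∘ₗ R.val.toLinearMap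

theorem finrank_eq_finrank_ker_diagEntry_add_one (hn : 0 < n)
    (R : Subalgebra F (Matrix (Fin n) (Fin n) F)) :
    finrank F R = finrank F (LinearMap.ker (diagEntry hn R)) + 1 := by
  have hsurj : Function.Surjective (diagEntry hn R) := fun c =>
    ⟨algebraMap F R c, by simp [diagEntry, Matrix.algebraMap_matrix_apply]⟩
  have := LinearMap.finrank_range_add_finrank_ker (diagEntry hn R)
  rw [LinearMap.range_eq_top.mpr hsurj, finrank_top, finrank_self] at this
  omega

theorem ker_diagEntry_pow_eq_bot (hn : 0 < n) {R : Subalgebra F (Matrix (Fin n) (Fin n) F)}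
    (hR : (R : Set (Matrix (Fin n) (Fin n) F)) ⊆ UStarSet F n) :
    LinearMap.ker (diagEntry hn R) ^ n = ⊥ := by
  have hstrict : (LinearMap.ker (diagEntry hn R)).map R.val.toLinearMap ≤
      Matrix.vanishingBelowSuperdiag F n 1 := by
    rintro _ ⟨r, hr, rfl⟩ i j hij
    rcases (Nat.lt_succ_iff.mp hij).lt_or_eq with hlt | heq
    · exact (hR r.2).1 i j hlt
    · obtain rfl : j = i := Fin.ext heq
      exact ((hR r.2).2 j ⟨0, hn⟩).trans hr
  have hmap : (LinearMap.ker (diagEntry hn R) ^ n).map R.val.toLinearMap = ⊥ := by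
    rw [Submodule.map_pow, eq_bot_iff, ← Matrix.vanishingBelowSuperdiag_one_pow_eq_bot]
    exact pow_le_pow_left' hstrict n
  exact map_injective_of_injective Subtype.val_injective (hmap.trans (Submodule.map_bot _).symm)

end UStar

theorem stmt10 (F : Type*) [Field F] (n : ℕ) (hn : 0 < n)
    (R : Subalgebra F (Matrix (Fin n) (Fin n) F))
    (hR : (R : Set (Matrix (Fin n) (Fin n) F)) ⊆ UStarSet F n)
    (V : Type*) [AddCommGroup V] [Module F V] [Module (↥R)ᵐᵒᵖ V]
    (hcompat : ∀ (c : F) (v : V),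
      (MulOpposite.op (algebraMap F ↥R c)) • v = c • v)
    (hfaith : ∀ r : ↥R, (∀ v : V, MulOpposite.op r • v = 0) → r = 0)
    [FiniteDimensional F V] (M : ℤ)
    (hM : IsGreatest (MSet (Module.finrank F V) (Module.finrank F V)) M) :
    (Module.finrank F ↥R : ℤ) ≤ M ∧
      2 * (M - 1) = (Module.finrank F V : ℤ) ^ 2 - (Module.finrank F V : ℤ) := by
  have : IsScalarTower F (↥R)ᵐᵒᵖ V := .of_algebraMap_smul hcompat
  have : FaithfulSMul (↥R)ᵐᵒᵖ V := ⟨fun {a b} hab => MulOpposite.unop_injective <|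
    sub_eq_zero.mp <| hfaith _ fun v => by simp [sub_smul, hab]⟩
  have hbound := two_mul_finrank_add_le_sq_of_pow_eq_bot (V := V)
    (N := (LinearMap.ker (diagEntry hn R)).map (MulOpposite.opLinearEquiv F).toLinearMap)
    (by rw [← map_op_pow, ker_diagEntry_pow_eq_bot hn hR, Submodule.map_bot])
  rw [LinearEquiv.finrank_map_eq] at hbound
  have hdim := finrank_eq_finrank_ker_diagEntry_add_one hn R
  have hMd := two_mul_sub_one_eq_of_isGreatest_MSet hM
  refine ⟨?_, hMd⟩
  zify at hbound hdim
  linarith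
end

section
/- Let F be a field, n and m positive integers, R an F-subalgebra of U_n^*(F) whose Jacobson radical J = J(R) satisfies Jᵐ = 0, and V a faithful right R-module that is finite dimensional over F. Then dim_F R ≤ M(m, dim_F V). -/
/-! Let `δ : R → F` read off the common diagonal entry. Its kernel `N` consists of strictly upper
triangular matrices and is an ideal, so it is nil, hence `N ⊆ J` and every product of `m` elements
of `N` vanishes; moreover `dim R = dim N + 1`. In the filtration `V ⊇ VN ⊇ ⋯ ⊇ VNᵐ = 0` put
`wᵢ = dim VNⁱ` and choose complements `Uᵢ` of `VNⁱ⁺¹` in `VNⁱ`, of dimension `kᵢ = wᵢ - wᵢ₊₁`.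
As `V` is faithful and the `Uᵢ` span `V`, restriction embeds `N` into `∏ Hom(Uᵢ, VNⁱ⁺¹)`, so
`dim N ≤ Σ kᵢ wᵢ₊₁ = (d² - Σ kᵢ²) / 2`, by telescoping `wᵢ² - wᵢ₊₁² = kᵢ² + 2 kᵢ wᵢ₊₁`. -/

open Module Pointwise

theorem iSup_eq_top_of_le_sup {α : Type*} [CompleteLattice α] {W U : ℕ → α} {m : ℕ}
    (h0 : W 0 = ⊤) (hm : W m = ⊥) (hWU : ∀ i, W i ≤ U i ⊔ W (i + 1)) :
    ⨆ i : Fin m, U i = ⊤ := by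
  have key : ∀ j ≤ m, W j ≤ ⨆ i : Fin m, U i := by
    intro j hj
    induction hj using Nat.decreasingInduction with
    | self => simp [hm]
    | of_succ k hk ih =>
      exact (hWU k).trans (sup_le (le_iSup (fun i : Fin m => U i) ⟨k, hk⟩) ih)
  exact top_le_iff.mp (h0 ▸ key 0 m.zero_le)

theorem Submodule.exists_le_sup_eq_finrank_add_eq {F V : Type*} [Field F] [AddCommGroup V]
    [Module F V] [FiniteDimensional F V] {W W' : Submodule F V} (h : W' ≤ W) :
    ∃ U ≤ W, U ⊔ W' = W ∧ finrank F U + finrank F W' = finrank F W := by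
  obtain ⟨C, hC⟩ := W'.exists_isCompl
  have hsup : C ⊓ W ⊔ W' = W := by
    rw [sup_comm, ← sup_inf_assoc_of_le C h, hC.sup_eq_top, top_inf_eq]
  have hinf : C ⊓ W ⊓ W' = ⊥ :=
    eq_bot_iff.mpr fun v hv => hC.disjoint.le_bot ⟨hv.2, hv.1.1⟩
  refine ⟨C ⊓ W, inf_le_right, hsup, ?_⟩
  have := finrank_sup_add_finrank_inf_eq (C ⊓ W) W'
  rw [hsup, hinf, finrank_bot] at this
  omega

theorem add_one_mem_MSet {m : ℕ} {k w : ℕ → ℕ} (hw : ∀ i, w i = k i + w (i + 1))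
    (hm : w m = 0) : (∑ i : Fin m, (k i * w (i + 1) : ℤ)) + 1 ∈ MSet m (w 0) := by
  have telescope (g : ℕ → ℤ) : ∑ i : Fin m, (g i - g (i + 1)) = g 0 - g m := by
    rw [Fin.sum_univ_eq_sum_range (fun i => g i - g (i + 1)), Finset.sum_range_sub']
  have hk (i : ℕ) : (k i : ℤ) = w i - w (i + 1) := by rw [hw i]; push_cast; ring
  refine ⟨fun i => k i, ?_, ?_⟩
  · zify
    calc ∑ i : Fin m, (k i : ℤ) = ∑ i : Fin m, ((w i : ℤ) - w (i + 1)) := by simp only [hk]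
      _ = w 0 := by rw [telescope (fun i => (w i : ℤ)), hm, Nat.cast_zero, sub_zero]
  · calc 2 * (∑ i : Fin m, (k i * w (i + 1) : ℤ) + 1 - 1)
        = ∑ i : Fin m, (((w i : ℤ) ^ 2 - (w (i + 1) : ℤ) ^ 2) - (k i : ℤ) ^ 2) := by
          rw [add_sub_cancel_right, Finset.mul_sum]
          exact Finset.sum_congr rfl fun i _ => by rw [hk]; ring
      _ = (w 0 : ℤ) ^ 2 - ∑ i : Fin m, (k i : ℤ) ^ 2 := by
          rw [Finset.sum_sub_distrib, telescope (fun i => (w i : ℤ) ^ 2), hm]; simp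

namespace Matrix

variable {n R : Type*} [Fintype n] [LinearOrder n]

theorem IsUpperTriangular.mul_apply_self [NonUnitalNonAssocSemiring R] {M N : Matrix n n R}
    (hM : M.IsUpperTriangular) (hN : N.IsUpperTriangular) (i : n) :
    (M * N) i i = M i i * N i i := by
  refine (mul_apply ..).trans (Finset.sum_eq_single i (fun k _ hki => ?_) (by simp))
  rcases lt_or_gt_of_ne hki with h | h
  · rw [hM h, zero_mul]
  · rw [hN h, mul_zero]

theorem IsUpperTriangular.isNilpotent [CommRing R] [DecidableEq n] {M : Matrix n n R}
    (hM : M.IsUpperTriangular) (hdiag : ∀ i, M i i = 0) : IsNilpotent M :=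
  ⟨Fintype.card n, by
    simpa [charpoly_of_isUpperTriangular M hM, hdiag] using M.aeval_self_charpoly⟩

end Matrix

theorem Ideal.mem_jacobson_bot_of_forall_isNilpotent_mul {R : Type*} [Ring R] {x : R}
    (h : ∀ y, IsNilpotent (y * x)) : x ∈ (⊥ : Ideal R).jacobson := by
  refine mem_jacobson_iff.mpr fun y => ?_
  obtain ⟨u, hu⟩ := (h y).isUnit_add_one
  refine ⟨(u⁻¹ : Rˣ), mem_bot.mpr ?_⟩
  rw [mul_assoc, sub_eq_zero, ← mul_add_one, ← hu, Units.inv_mul]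

theorem MulOpposite.list_prod_eq_zero_of_mem_map_op {F A : Type*} [CommSemiring F] [Semiring A]
    [Module F A] {N : Submodule F A} {m : ℕ}
    (hN : ∀ l : List A, l.length = m → (∀ a ∈ l, a ∈ N) → l.prod = 0) (l : List Aᵐᵒᵖ)
    (hl : l.length = m) (hmem : ∀ a ∈ l, a ∈ N.map (opLinearEquiv F : A ≃ₗ[F] Aᵐᵒᵖ).toLinearMap) :
    l.prod = 0 := by
  refine unop_injective ?_
  rw [unop_list_prod, unop_zero]
  exact hN _ (by simp [hl]) fun a ha => by
    obtain ⟨b, hb, rfl⟩ := List.mem_map.mp (List.mem_reverse.mp ha)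
    exact (Submodule.mem_map_equiv N).mp (hmem b hb)

section Filtration

variable {R A V : Type*} [CommSemiring R] [Semiring A] [Algebra R A] [AddCommMonoid V]
  [Module R V] [Module A V]

/-- `N.powSMulTop i` is `Nⁱ V`, giving the filtration `V ⊇ N V ⊇ N² V ⊇ ⋯`. -/
def Submodule.powSMulTop (N : Submodule R A) : ℕ → Submodule R V
  | 0 => ⊤
  | i + 1 => (N : Set A) • powSMulTop N i

namespace Submodule

variable (N : Submodule R A)

theorem powSMulTop_succ_le (i : ℕ) : N.powSMulTop (V := V) (i + 1) ≤ N.powSMulTop i := by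
  induction i with
  | zero => exact le_top
  | succ i ih => exact set_smul_le _ _ _ fun _ _ ha hv => mem_set_smul_of_mem_mem ha (ih hv)

theorem smul_mem_powSMulTop_succ {a : A} (ha : a ∈ N) {i : ℕ} {v : V} (hv : v ∈ N.powSMulTop i) :
    a • v ∈ N.powSMulTop (i + 1) :=
  mem_set_smul_of_mem_mem ha hv

theorem powSMulTop_eq_bot [IsScalarTower R A V] {m : ℕ}
    (hN : ∀ l : List A, l.length = m → (∀ a ∈ l, a ∈ N) → l.prod = 0) :
    N.powSMulTop (V := V) m = ⊥ := by
  suffices h : ∀ i, ∀ l : List A, l.length + i = m → (∀ a ∈ l, a ∈ N) →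
      N.powSMulTop i ≤ LinearMap.ker (DistribSMul.toLinearMap R V l.prod) by
    refine eq_bot_iff.mpr fun v hv => ?_
    simpa using h m [] (by simp) (by simp) hv
  intro i
  induction i with
  | zero =>
    intro l hl hmem v _
    simp [hN l hl hmem]
  | succ i ih =>
    intro l hl hmem
    refine set_smul_le _ _ _ fun a v ha hv => ?_
    have := ih (l ++ [a]) (by simp; omega) (by simpa [or_imp, forall_and] using ⟨hmem, ha⟩) hv
    simpa [mul_smul] using this

end Submodule

end Filtration

section Faithful

variable {F A V : Type*} [Field F] [Ring A] [Algebra F A] [AddCommGroup V] [Module F V]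
  [Module A V] [IsScalarTower F A V] [FaithfulSMul A V] [FiniteDimensional F V]

theorem finrank_le_sum_finrank_mul_finrank {ι : Type*} [Fintype ι] (N : Submodule F A)
    (U W : ι → Submodule F V) (hU : ⨆ i, U i = ⊤)
    (hUW : ∀ a ∈ N, ∀ i, ∀ u ∈ U i, a • u ∈ W i) :
    finrank F N ≤ ∑ i, finrank F (U i) * finrank F (W i) := by
  let restrict (i : ι) : N →ₗ[F] U i →ₗ[F] W i :=
    LinearMap.mk₂ F (fun a u => ⟨(a : A) • (u : V), hUW a a.2 i u u.2⟩)
      (fun _ _ _ => Subtype.ext (add_smul _ _ _)) (fun _ _ _ => Subtype.ext (smul_assoc _ _ _))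
      (fun _ _ _ => Subtype.ext (smul_add _ _ _)) (fun _ _ _ => Subtype.ext (smul_comm _ _ _))
  have hinj : Function.Injective (LinearMap.pi restrict) := by
    refine (injective_iff_map_eq_zero _).mpr fun a ha => ?_
    have hker : ⊤ ≤ LinearMap.ker (DistribSMul.toLinearMap F V (a : A)) :=
      hU ▸ iSup_le fun i u hu => congrArg Subtype.val (LinearMap.congr_fun (congr_fun ha i) ⟨u, hu⟩)
    exact Subtype.ext (eq_of_smul_eq_smul fun v : V => by
      simpa using hker (Submodule.mem_top (x := v)))
  have := LinearMap.finrank_le_finrank_of_injective hinj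
  simpa only [finrank_pi_fintype, finrank_linearMap] using this

theorem exists_mem_MSet_finrank_add_one_le (N : Submodule F A) (m : ℕ)
    (hN : ∀ l : List A, l.length = m → (∀ a ∈ l, a ∈ N) → l.prod = 0) :
    ∃ e ∈ MSet m (finrank F V), (finrank F N : ℤ) + 1 ≤ e := by
  have hWm : N.powSMulTop (V := V) m = ⊥ := N.powSMulTop_eq_bot hN
  choose U hUW hsup hfinrank using fun i => Submodule.exists_le_sup_eq_finrank_add_eq
    (N.powSMulTop_succ_le (V := V) i)
  have hUtop : ⨆ i : Fin m, U i = ⊤ := iSup_eq_top_of_le_sup rfl hWm fun i => (hsup i).ge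
  have hN_le := finrank_le_sum_finrank_mul_finrank N (fun i : Fin m => U i)
    (fun i => N.powSMulTop (i + 1)) hUtop
    fun a ha i u hu => N.smul_mem_powSMulTop_succ ha (hUW i hu)
  have hmem := add_one_mem_MSet (m := m) (k := fun i => finrank F (U i))
    (w := fun i => finrank F (N.powSMulTop (V := V) i)) (fun i => (hfinrank i).symm)
    (by simp [hWm])
  rw [Submodule.powSMulTop, finrank_top] at hmem
  exact ⟨_, hmem, by exact_mod_cast Nat.add_le_add_right hN_le 1⟩

end Faithful

section UStar

variable {F : Type*} [Field F] {n : ℕ}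

theorem isNilpotent_of_mem_UStarSet {A : Matrix (Fin n) (Fin n) F} (hA : A ∈ UStarSet F n)
    {i : Fin n} (hi : A i i = 0) : IsNilpotent A :=
  Matrix.IsUpperTriangular.isNilpotent (fun j k h => hA.1 j k h) fun j => (hA.2 j i).trans hi

theorem mem_jacobson_bot_of_subset_UStarSet {R : Subalgebra F (Matrix (Fin n) (Fin n) F)}
    (hR : (R : Set (Matrix (Fin n) (Fin n) F)) ⊆ UStarSet F n) {x : R} {i : Fin n}
    (hx : (x : Matrix (Fin n) (Fin n) F) i i = 0) : x ∈ (⊥ : Ideal R).jacobson := by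
  refine Ideal.mem_jacobson_bot_of_forall_isNilpotent_mul fun y => ?_
  have hupper (r : R) : (r : Matrix (Fin n) (Fin n) F).IsUpperTriangular :=
    fun j k h => (hR r.2).1 j k h
  refine (IsNilpotent.map_iff (f := R.val) Subtype.val_injective).mp ?_
  refine isNilpotent_of_mem_UStarSet (hR (y * x).2) (i := i) ?_
  change ((y * x : R) : Matrix (Fin n) (Fin n) F) i i = 0
  rw [Subalgebra.coe_mul, (hupper y).mul_apply_self (hupper x) i, hx, mul_zero]

end UStar

theorem stmt11_general (F : Type*) [Field F] (n m : ℕ) (hn : 0 < n)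
    (R : Subalgebra F (Matrix (Fin n) (Fin n) F))
    (hR : (R : Set (Matrix (Fin n) (Fin n) F)) ⊆ UStarSet F n)
    (hJ : ∀ l : List ↥R, l.length = m →
      (∀ x ∈ l, x ∈ (⊥ : Ideal ↥R).jacobson) → l.prod = 0)
    (V : Type*) [AddCommGroup V] [Module F V] [Module (↥R)ᵐᵒᵖ V]
    (hcompat : ∀ (c : F) (v : V),
      (MulOpposite.op (algebraMap F ↥R c)) • v = c • v)
    (hfaith : ∀ r : ↥R, (∀ v : V, MulOpposite.op r • v = 0) → r = 0)
    [FiniteDimensional F V] (M : ℤ)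
    (hM : IsGreatest (MSet m (Module.finrank F V)) M) :
    (Module.finrank F ↥R : ℤ) ≤ M := by
  let i : Fin n := ⟨0, hn⟩
  let δ : Module.Dual F R := (Matrix.entryLinearMap F F i i).comp R.val.toLinearMap
  have hδ : δ ≠ 0 := fun h => by simpa [δ] using LinearMap.congr_fun h 1
  have hK (l : List R) (hl : l.length = m) (hmem : ∀ x ∈ l, x ∈ LinearMap.ker δ) : l.prod = 0 :=
    hJ l hl fun x hx => mem_jacobson_bot_of_subset_UStarSet hR (i := i) (hmem x hx)
  have : IsScalarTower F Rᵐᵒᵖ V := IsScalarTower.of_algebraMap_smul hcompat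
  have : FaithfulSMul Rᵐᵒᵖ V := ⟨fun {a b} h => by
    have hab := hfaith (a - b).unop fun v => by simp [sub_smul, h v]
    exact sub_eq_zero.mp (MulOpposite.unop_injective (by simpa using hab))⟩
  obtain ⟨e, he, hle⟩ := exists_mem_MSet_finrank_add_one_le (V := V)
    ((LinearMap.ker δ).map (MulOpposite.opLinearEquiv F : R ≃ₗ[F] Rᵐᵒᵖ).toLinearMap) m
    (MulOpposite.list_prod_eq_zero_of_mem_map_op hK)
  rw [LinearEquiv.finrank_map_eq] at hle
  calc (finrank F R : ℤ) = finrank F (LinearMap.ker δ) + 1 := by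
        rw [← δ.finrank_ker_add_one_of_ne_zero hδ]; push_cast; rfl
    _ ≤ e := hle
    _ ≤ M := hM.2 he

theorem stmt11 (F : Type*) [Field F] (n m : ℕ) (hn : 0 < n) (hm : 0 < m)
    (R : Subalgebra F (Matrix (Fin n) (Fin n) F))
    (hR : (R : Set (Matrix (Fin n) (Fin n) F)) ⊆ UStarSet F n)
    (hJ : ∀ l : List ↥R, l.length = m →
      (∀ x ∈ l, x ∈ (⊥ : Ideal ↥R).jacobson) → l.prod = 0)
    (V : Type*) [AddCommGroup V] [Module F V] [Module (↥R)ᵐᵒᵖ V]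
    (hcompat : ∀ (c : F) (v : V),
      (MulOpposite.op (algebraMap F ↥R c)) • v = c • v)
    (hfaith : ∀ r : ↥R, (∀ v : V, MulOpposite.op r • v = 0) → r = 0)
    [FiniteDimensional F V] (M : ℤ)
    (hM : IsGreatest (MSet m (Module.finrank F V)) M) :
    (Module.finrank F ↥R : ℤ) ≤ M :=
  stmt11_general F n m hn R hR hJ V hcompat hfaith M hM
end

section
/- Let F be any field, m and n positive integers, and R an F-subalgebra of U_n^*(F) that is Lie nilpotent of index m. Then dim_F R ≤ M(m+1, n). -/
/-!
The strictly upper triangular elements of `R` form a subspace `K` of codimension at most one.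
Order the positions `(r, u)` by superdiagonal `u - r`, then by row. As in row echelon form, `dim K`
is at most the number of positions at which some element of `K` has its first nonzero entry. If
`x` leads at `(a, b)` and `y` at `(b, c)` with `a < b`, then `[x, y]` leads at `(a, c)`, so Lie
nilpotency of index `m` rules out chains `(w₀, w₁), (w₁, w₂), …, (wₘ, wₘ₊₁)` of leading positions.
Grading each index by the length of the longest chain ending there gives levels `0, …, m` of sizes
`kᵢ` with `Σ kᵢ = n`; every leading position climbs a level, so there are at most
`(n² - Σ kᵢ²) / 2` of them.
-/

open Finset Module

namespace Matrix

variable {S : Type*} {n : ℕ}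

section LeadingPosition

variable [Zero S]

/-- Positions `(r, u)` are ordered by the superdiagonal `u - r`, then by the row `r`. -/
def IsLeadingPosition (x : Matrix (Fin n) (Fin n) S) (a b : Fin n) : Prop :=
  x a b ≠ 0 ∧ ∀ r u : Fin n,
    (u : ℕ) + a < b + r ∨ ((u : ℕ) + a = b + r ∧ (r : ℕ) < a) → x r u = 0

theorem IsLeadingPosition.le_of_ne_zero {x : Matrix (Fin n) (Fin n) S} {a b : Fin n}
    (h : x.IsLeadingPosition a b) {r u : Fin n} (hru : x r u ≠ 0) :
    (b : ℕ) + r < u + a ∨ ((u : ℕ) + a = b + r ∧ (a : ℕ) ≤ r) := by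
  by_contra hc
  exact hru (h.2 r u (by omega))

theorem exists_isLeadingPosition {x : Matrix (Fin n) (Fin n) S} (hx : x ≠ 0) :
    ∃ a b, x.IsLeadingPosition a b := by
  classical
  obtain ⟨p, hp⟩ : ∃ p : Fin n × Fin n, x p.1 p.2 ≠ 0 := by
    by_contra! h
    exact hx (Matrix.ext fun i j => h (i, j))
  obtain ⟨⟨a, b⟩, hab, hmin⟩ := exists_min_image {p : Fin n × Fin n | x p.1 p.2 ≠ 0}
    (fun p => toLex ((p.2 : ℤ) - p.1, (p.1 : ℤ))) ⟨p, by simpa using hp⟩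
  refine ⟨a, b, (mem_filter.1 hab).2, fun r u hru => ?_⟩
  by_contra hne
  refine (hmin (r, u) (by simpa using hne)).not_gt (Prod.Lex.toLex_lt_toLex.2 ?_)
  dsimp only
  omega

end LeadingPosition

section Commutator

variable [Ring S] {x y : Matrix (Fin n) (Fin n) S}

theorem IsLeadingPosition.le_of_mul_ne_zero {a b a' b' : Fin n} (hx : x.IsLeadingPosition a b)
    (hy : y.IsLeadingPosition a' b') {r u : Fin n} (hru : (x * y) r u ≠ 0) :
    (b : ℕ) + b' + r < u + a + a' ∨ ((u : ℕ) + a + a' = b + b' + r ∧ (a : ℕ) ≤ r) := by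
  obtain ⟨s, -, hs⟩ := exists_ne_zero_of_sum_ne_zero (by rwa [mul_apply] at hru)
  have := hx.le_of_ne_zero (left_ne_zero_of_mul hs)
  have := hy.le_of_ne_zero (right_ne_zero_of_mul hs)
  omega

theorem IsLeadingPosition.commutator [NoZeroDivisors S] {a b c : Fin n}
    (hx : x.IsLeadingPosition a b) (hy : y.IsLeadingPosition b c) (hab : a < b) :
    (x * y - y * x).IsLeadingPosition a c := by
  have hxy_ac : (x * y) a c = x a b * y b c := by
    rw [mul_apply]
    refine sum_eq_single b (fun s _ hsb => ?_) (fun h => absurd (mem_univ b) h)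
    by_contra hs
    have := hx.le_of_ne_zero (left_ne_zero_of_mul hs)
    have := hy.le_of_ne_zero (right_ne_zero_of_mul hs)
    have := Fin.val_ne_of_ne hsb
    omega
  -- on the superdiagonal of `(a, c)`, `y * x` can only be nonzero in rows `≥ b > a`
  have hyx_ac : (y * x) a c = 0 := by
    by_contra h
    have := hy.le_of_mul_ne_zero hx h
    omega
  refine ⟨?_, fun r u hru => ?_⟩
  · rw [sub_apply, hxy_ac, hyx_ac, sub_zero]
    exact mul_ne_zero hx.1 hy.1
  · have hxy : (x * y) r u = 0 := by
      by_contra h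
      have := hx.le_of_mul_ne_zero hy h
      omega
    have hyx : (y * x) r u = 0 := by
      by_contra h
      have := hy.le_of_mul_ne_zero hx h
      omega
    rw [sub_apply, hxy, hyx, sub_zero]

end Commutator

variable (S n) in
def strictUpper [Semiring S] : Submodule S (Matrix (Fin n) (Fin n) S) where
  carrier := {x | ∀ i j, j ≤ i → x i j = 0}
  add_mem' hx hy i j h := by simp [hx i j h, hy i j h]
  zero_mem' _ _ _ := rfl
  smul_mem' c x hx i j h := by simp [hx i j h]

theorem IsLeadingPosition.lt_of_mem_strictUpper [Semiring S] {x : Matrix (Fin n) (Fin n) S}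
    {a b : Fin n} (h : x.IsLeadingPosition a b) (hx : x ∈ strictUpper S n) : a < b :=
  lt_of_not_ge fun hba => h.1 (hx a b hba)

open Classical in
noncomputable def leadingPositions [Zero S] (V : Set (Matrix (Fin n) (Fin n) S)) :
    Finset (Fin n × Fin n) :=
  {p | ∃ x ∈ V, x.IsLeadingPosition p.1 p.2}

theorem mem_leadingPositions [Zero S] {V : Set (Matrix (Fin n) (Fin n) S)} {p : Fin n × Fin n} :
    p ∈ leadingPositions V ↔ ∃ x ∈ V, x.IsLeadingPosition p.1 p.2 := by
  simp [leadingPositions]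

theorem finrank_le_card_leadingPositions {F : Type*} [DivisionRing F]
    (V : Submodule F (Matrix (Fin n) (Fin n) F)) :
    finrank F V ≤ #(leadingPositions (V : Set (Matrix (Fin n) (Fin n) F))) := by
  let ψ : V →ₗ[F] (leadingPositions (V : Set (Matrix (Fin n) (Fin n) F)) → F) :=
    LinearMap.pi fun p => (entryLinearMap F F p.1.1 p.1.2).comp V.subtype
  have hψ : Function.Injective ψ := by
    refine (injective_iff_map_eq_zero ψ).2 fun x hx => ?_
    by_contra hne
    obtain ⟨a, b, hab⟩ := exists_isLeadingPosition (Subtype.coe_ne_coe.2 hne)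
    exact hab.1 (congrFun hx ⟨(a, b), mem_leadingPositions.2 ⟨x, x.2, hab⟩⟩)
  simpa using LinearMap.finrank_le_finrank_of_injective hψ

end Matrix

section UpperTriangular

variable {F : Type*} [Field F] {n : ℕ}

theorem UStarSet_subset_span_one_sup_strictUpper :
    UStarSet F n ⊆ ((F ∙ (1 : Matrix (Fin n) (Fin n) F)) ⊔ Matrix.strictUpper F n :) := by
  rintro x ⟨hlower, hdiag⟩
  rcases isEmpty_or_nonempty (Fin n) with _ | ⟨⟨i₀⟩⟩
  · rw [Subsingleton.elim x 0]
    exact zero_mem _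
  rw [← add_sub_cancel (x i₀ i₀ • 1) x]
  refine add_mem (Submodule.mem_sup_left (Submodule.mem_span_singleton.2 ⟨_, rfl⟩))
    (Submodule.mem_sup_right fun i j hji => ?_)
  rcases hji.lt_or_eq with hji | rfl
  · simp [hlower i j hji, Matrix.one_apply_ne hji.ne']
  · simp [hdiag j i₀]

theorem finrank_le_finrank_inf_strictUpper_add_one (V : Submodule F (Matrix (Fin n) (Fin n) F))
    (hV : (V : Set (Matrix (Fin n) (Fin n) F)) ⊆ UStarSet F n) :
    finrank F V ≤ finrank F (V ⊓ Matrix.strictUpper F n :) + 1 := by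
  have hsup :
      finrank F (V ⊔ Matrix.strictUpper F n :) ≤ 1 + finrank F (Matrix.strictUpper F n) :=
    calc finrank F (V ⊔ Matrix.strictUpper F n :)
        ≤ finrank F ((F ∙ (1 : Matrix (Fin n) (Fin n) F)) ⊔ Matrix.strictUpper F n :) :=
          Submodule.finrank_mono
            (sup_le (fun _ hx => UStarSet_subset_span_one_sup_strictUpper (hV hx)) le_sup_right)
      _ ≤ finrank F (F ∙ (1 : Matrix (Fin n) (Fin n) F)) + finrank F (Matrix.strictUpper F n) :=
          Submodule.finrank_add_le_finrank_add_finrank _ _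
      _ ≤ 1 + finrank F (Matrix.strictUpper F n) := by
          gcongr
          simpa using finrank_span_le_card ({1} : Set (Matrix (Fin n) (Fin n) F))
  have := Submodule.finrank_sup_add_finrank_inf_eq V (Matrix.strictUpper F n)
  omega

end UpperTriangular

theorem lieComm_append_singleton {A : Type*} [Ring A] (x y : A) (xs : List A) :
    lieComm x (xs ++ [y]) = lieComm x xs * y - y * lieComm x xs := by
  simp [lieComm]

theorem map_lieComm_s13 {A B G : Type*} [Ring A] [Ring B] [FunLike G A B] [RingHomClass G A B]
    (f : G) (x : A) (xs : List A) : f (lieComm x xs) = lieComm (f x) (xs.map f) := by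
  induction xs generalizing x with
  | nil => rfl
  | cons y ys ih => simpa [lieComm] using ih (x * y - y * x)

theorem isLeadingPosition_lieComm {S : Type*} [Ring S] [NoZeroDivisors S] {n : ℕ}
    {x : ℕ → Matrix (Fin n) (Fin n) S} {v : ℕ → Fin n} {k : ℕ}
    (h : ∀ t ≤ k, v t < v (t + 1) ∧ (x t).IsLeadingPosition (v t) (v (t + 1))) :
    (lieComm (x 0) ((List.range k).map fun t => x (t + 1))).IsLeadingPosition (v 0) (v (k + 1)) ∧
      v 0 < v (k + 1) := by
  induction k with
  | zero => simpa [lieComm] using (h 0 le_rfl).symm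
  | succ k ih =>
    obtain ⟨hlead, hlt⟩ := ih fun t ht => h t (by omega)
    obtain ⟨hlt', hlead'⟩ := h (k + 1) le_rfl
    rw [List.range_succ, List.map_append, List.map_singleton, lieComm_append_singleton]
    exact ⟨hlead.commutator hlead' hlt, hlt.trans hlt'⟩

theorem IsLieNilpotentOfIndex.not_isLeadingPosition_chain {F : Type*} [Field F] {n m : ℕ}
    {R : Subalgebra F (Matrix (Fin n) (Fin n) F)} (hLie : IsLieNilpotentOfIndex R m)
    (w : ℕ → Fin n) :
    ¬ ∀ t ≤ m, w t < w (t + 1) ∧ ∃ x ∈ R, x.IsLeadingPosition (w t) (w (t + 1)) := by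
  intro hw
  have : ∀ t, ∃ x ∈ R, t ≤ m → x.IsLeadingPosition (w t) (w (t + 1)) := fun t =>
    if ht : t ≤ m then (hw t ht).2.imp fun _ hx => ⟨hx.1, fun _ => hx.2⟩
    else ⟨0, zero_mem R, fun h => absurd h ht⟩
  choose x hxR hx using this
  have hzero : lieComm (x 0) ((List.range m).map fun t => x (t + 1)) = 0 := by
    simpa [map_lieComm_s13, Function.comp_def] using congrArg R.val <|
      hLie ⟨x 0, hxR 0⟩ ((List.range m).map fun t => ⟨x (t + 1), hxR (t + 1)⟩) (by simp)
  exact (isLeadingPosition_lieComm fun t ht => ⟨(hw t ht).1, hx t ht⟩).1.1 (by rw [hzero]; rfl)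

theorem exists_level_of_not_path {α : Type*} (E : α → α → Prop) (m : ℕ)
    (hE : ∀ w : ℕ → α, ¬ ∀ t ≤ m, E (w t) (w (t + 1))) :
    ∃ L : α → Fin (m + 1), ∀ a b, E a b → L a < L b := by
  classical
  let IsPathTo (k : ℕ) (b : α) : Prop := ∃ w : ℕ → α, w k = b ∧ ∀ t < k, E (w t) (w (t + 1))
  have hlength : ∀ k b, IsPathTo k b → k ≤ m := by
    rintro k b ⟨w, -, hw⟩
    by_contra! hk
    exact hE w fun t ht => hw t (by omega)
  refine ⟨fun b => ⟨Nat.findGreatest (IsPathTo · b) m, Nat.lt_succ_of_le (Nat.findGreatest_le m)⟩,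
    fun a b hab => ?_⟩
  set k := Nat.findGreatest (IsPathTo · a) m
  obtain ⟨w, hwk, hw⟩ : IsPathTo k a :=
    Nat.findGreatest_spec (P := (IsPathTo · a)) (Nat.zero_le m) ⟨fun _ => a, rfl, by simp⟩
  have hext : IsPathTo (k + 1) b := by
    refine ⟨fun t => if t ≤ k then w t else b, by simp, fun t ht => ?_⟩
    rcases Nat.lt_succ_iff_lt_or_eq.1 ht with ht | rfl
    · simpa [ht.le, Nat.succ_le_of_lt ht] using hw t ht
    · simpa [hwk] using hab
  exact Nat.le_findGreatest (hlength _ _ hext) hext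

theorem two_mul_card_lt_add_sum_sq {α β : Type*} [Fintype α] [Fintype β] [LinearOrder β]
    (f : α → β) :
    2 * #{p : α × α | f p.1 < f p.2} + ∑ b, #{a | f a = b} ^ 2 = Fintype.card α ^ 2 := by
  classical
  have hswap : #{p : α × α | f p.2 < f p.1} = #{p : α × α | f p.1 < f p.2} :=
    card_nbij' Prod.swap Prod.swap (by simp [Set.MapsTo]) (by simp [Set.MapsTo])
      (by simp [Set.LeftInvOn]) (by simp [Set.RightInvOn, Set.LeftInvOn])
  have hdiag : #{p : α × α | f p.1 = f p.2} = ∑ b, #{a | f a = b} ^ 2 := by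
    rw [card_eq_sum_card_fiberwise (f := fun p => f p.1) (t := univ) (by simp)]
    refine sum_congr rfl fun b _ => ?_
    rw [sq, ← card_product]
    congr 1
    ext p
    simp only [mem_filter, mem_univ, true_and, mem_product]
    grind
  have hsplit : #{p : α × α | f p.1 < f p.2} + #{p : α × α | f p.2 < f p.1} +
      #{p : α × α | f p.1 = f p.2} = Fintype.card α ^ 2 := by
    simp only [card_filter, ← sum_add_distrib]
    rw [sq, ← Fintype.card_prod, ← card_univ, card_eq_sum_ones]
    refine sum_congr rfl fun p _ => ?_
    rcases lt_trichotomy (f p.1) (f p.2) with h | h | h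
    · simp [h, h.not_gt, h.ne]
    · simp [h]
    · simp [h, h.not_gt, h.ne']
  omega

theorem card_lt_add_one_mem_MSet {ℓ n : ℕ} (f : Fin n → Fin ℓ) :
    (#{p : Fin n × Fin n | f p.1 < f p.2} : ℤ) + 1 ∈ MSet ℓ n := by
  refine ⟨fun q => #{a | f a = q}, ?_, ?_⟩
  · simpa using (card_eq_sum_card_fiberwise (f := f) (s := univ) (t := univ) (by simp)).symm
  · have h := two_mul_card_lt_add_sum_sq f
    rw [Fintype.card_fin] at h
    zify at h
    linarith

theorem stmt13_general (F : Type*) [Field F] (m n : ℕ)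
    (R : Subalgebra F (Matrix (Fin n) (Fin n) F))
    (hR : (R : Set (Matrix (Fin n) (Fin n) F)) ⊆ UStarSet F n)
    (hLie : IsLieNilpotentOfIndex ↥R m)
    (M : ℤ) (hM : IsGreatest (MSet (m + 1) n) M) :
    (Module.finrank F ↥R : ℤ) ≤ M := by
  set K := Subalgebra.toSubmodule R ⊓ Matrix.strictUpper F n
  set P := Matrix.leadingPositions (K : Set (Matrix (Fin n) (Fin n) F))
  have hP : ∀ {a b}, (a, b) ∈ P → a < b ∧ ∃ x ∈ R, x.IsLeadingPosition a b := by
    intro a b h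
    obtain ⟨x, ⟨hxR, hxU⟩, hx⟩ := Matrix.mem_leadingPositions.1 h
    exact ⟨hx.lt_of_mem_strictUpper hxU, x, hxR, hx⟩
  obtain ⟨L, hL⟩ := exists_level_of_not_path (fun a b => (a, b) ∈ P) m
    fun w hw => hLie.not_isLeadingPosition_chain w fun t ht => hP (hw t ht)
  have hPL : P ⊆ univ.filter fun p => L p.1 < L p.2 :=
    fun p hp => mem_filter.2 ⟨mem_univ _, hL _ _ hp⟩
  have hdim : finrank F R ≤ #{p : Fin n × Fin n | L p.1 < L p.2} + 1 :=
    calc finrank F R = finrank F (Subalgebra.toSubmodule R) :=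
          (Subalgebra.finrank_toSubmodule R).symm
      _ ≤ finrank F K + 1 := finrank_le_finrank_inf_strictUpper_add_one _ hR
      _ ≤ #P + 1 := by grw [Matrix.finrank_le_card_leadingPositions K]
      _ ≤ _ := by grw [card_le_card hPL]
  calc (finrank F R : ℤ) ≤ #{p : Fin n × Fin n | L p.1 < L p.2} + 1 := by exact_mod_cast hdim
    _ ≤ M := hM.2 (card_lt_add_one_mem_MSet L)

theorem stmt13 (F : Type*) [Field F] (m n : ℕ) (hm : 0 < m) (hn : 0 < n)
    (R : Subalgebra F (Matrix (Fin n) (Fin n) F))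
    (hR : (R : Set (Matrix (Fin n) (Fin n) F)) ⊆ UStarSet F n)
    (hLie : IsLieNilpotentOfIndex ↥R m)
    (M : ℤ) (hM : IsGreatest (MSet (m + 1) n) M) :
    (Module.finrank F ↥R : ℤ) ≤ M :=
  stmt13_general F m n R hR hLie M hM
end

section
/- Let ℓ be an integer with ℓ ≥ 2 and n_1, n_2, …, n_k any finite sequence of positive integers. Then M(ℓ, Σ_{i=1}^{k} n_i) ≥ Σ_{i=1}^{k} M(ℓ, n_i). -/
open Finset

theorem sum_sum_mul_comp_add {G R : Type*} [AddGroup G] [Fintype G]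
    [NonUnitalNonAssocSemiring R] (f g : G → R) :
    ∑ t, ∑ j, f j * g (j + t) = (∑ j, f j) * ∑ j, g j := by
  rw [sum_comm, sum_mul]
  refine sum_congr rfl fun j _ => ?_
  rw [← mul_sum, ← Equiv.sum_comp (Equiv.addLeft j) g]
  rfl

theorem exists_sum_mul_comp_add_lt {G : Type*} [AddGroup G] [Fintype G] [Nontrivial G]
    (f g : G → ℕ) (hf : 0 < ∑ j, f j) (hg : 0 < ∑ j, g j) :
    ∃ t, ∑ j, f j * g (j + t) < (∑ j, f j) * ∑ j, g j := by
  by_contra! h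
  have hcard := Fintype.one_lt_card (α := G)
  have := card_nsmul_le_sum univ _ _ fun t _ => h t
  rw [sum_sum_mul_comp_add, smul_eq_mul, card_univ] at this
  nlinarith [Nat.mul_pos hf hg]

theorem exists_mem_MSet_add_ge {ℓ a b : ℕ} (hl : 2 ≤ ℓ) (ha : 0 < a) (hb : 0 < b)
    {x y : ℤ} (hx : x ∈ MSet ℓ a) (hy : y ∈ MSet ℓ b) :
    ∃ z ∈ MSet ℓ (a + b), x + y ≤ z := by
  have : NeZero ℓ := ⟨by omega⟩
  have : Nontrivial (Fin ℓ) := Fin.nontrivial_iff_two_le.mpr hl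
  obtain ⟨k, rfl, hkx⟩ := hx
  obtain ⟨k', rfl, hky⟩ := hy
  obtain ⟨t, ht⟩ := exists_sum_mul_comp_add_lt k k' ha hb
  have hshift {R : Type} [AddCommMonoid R] (f : ℕ → R) :
      ∑ j, f (k' (j + t)) = ∑ j, f (k' j) :=
    Equiv.sum_comp (Equiv.addRight t) (f ∘ k')
  set S := ∑ j, k j * k' (j + t)
  refine ⟨x + y - 1 + ((∑ j, k j) * ∑ j, k' j - S : ℕ), ⟨fun j => k j + k' (j + t), ?_, ?_⟩, ?_⟩
  · rw [sum_add_distrib]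
    exact congrArg _ (hshift id)
  · have hsq : ∑ j, ((k j + k' (j + t) : ℕ) : ℤ) ^ 2 =
        ∑ j, (k j : ℤ) ^ 2 + ∑ j, (k' j : ℤ) ^ 2 + 2 * (S : ℤ) := by
      simp only [S, Nat.cast_add, add_sq, sum_add_distrib, Nat.cast_sum, Nat.cast_mul, mul_sum,
        hshift fun n => (n : ℤ) ^ 2]
      ring_nf
    rw [hsq, Nat.cast_sub ht.le]
    push_cast at hkx hky ⊢
    linear_combination hkx + hky
  · omega

theorem one_mem_MSet_zero (ℓ : ℕ) : 1 ∈ MSet ℓ 0 :=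
  ⟨0, by simp, by simp⟩

theorem exists_mem_MSet_sum_ge {ι : Type*} {ℓ : ℕ} (hl : 2 ≤ ℓ) {n : ι → ℕ} {M : ι → ℤ}
    (s : Finset ι) (hn : ∀ i ∈ s, 0 < n i) (hM : ∀ i ∈ s, M i ∈ MSet ℓ (n i)) :
    ∃ z ∈ MSet ℓ (∑ i ∈ s, n i), ∑ i ∈ s, M i ≤ z := by
  classical
  induction s using Finset.induction_on with
  | empty => exact ⟨1, one_mem_MSet_zero ℓ, zero_le_one⟩
  | insert i s hi ih =>
    simp only [forall_mem_insert] at hn hM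
    rw [sum_insert hi, sum_insert hi]
    rcases s.eq_empty_or_nonempty with rfl | hs
    · simpa using ⟨M i, hM.1, le_rfl⟩
    obtain ⟨z, hz, hMz⟩ := ih hn.2 hM.2
    obtain ⟨w, hw, hzw⟩ :=
      exists_mem_MSet_add_ge hl hn.1 (sum_pos (fun j hj => hn.2 j hj) hs) hM.1 hz
    exact ⟨w, hw, by linarith⟩

theorem stmt16 (ℓ : ℕ) (hl : 2 ≤ ℓ) (k : ℕ) (nseq : Fin k → ℕ)
    (hpos : ∀ i, 0 < nseq i) (Ms : Fin k → ℤ)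
    (hMs : ∀ i, IsGreatest (MSet ℓ (nseq i)) (Ms i))
    (Mtot : ℤ) (hMtot : IsGreatest (MSet ℓ (∑ i, nseq i)) Mtot) :
    (∑ i, Ms i) ≤ Mtot := by
  obtain ⟨z, hz, hle⟩ :=
    exists_mem_MSet_sum_ge hl univ (fun i _ => hpos i) fun i _ => (hMs i).1
  exact hle.trans (hMtot.2 hz)
end

section
/- Let ℓ and n be positive integers with ℓ ≤ n, and let r = n mod ℓ (the nonnegative remainder on dividing n by ℓ). Then M(ℓ,n) = (1/2)(n² − (ℓ − r)⌊n/ℓ⌋² − r(⌊n/ℓ⌋ + 1)²) + 1 = n²(ℓ − 1)/(2ℓ) + (1/2)(r²/ℓ − r) + 1, where the last expression is evaluated in the rational numbers. -/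
lemma sum_split {Mo : Type*} [AddCommMonoid Mo] (r ℓ : ℕ) (h : r ≤ ℓ) (a b : Mo) :
    ∑ i ∈ Finset.range ℓ, (if i < r then a else b) = r • a + (ℓ - r) • b := by
  rw [Finset.sum_ite]
  have h1 : (Finset.range ℓ).filter (fun i => i < r) = Finset.range r := by
    ext i; simp; omega
  have h2 : (Finset.range ℓ).filter (fun i => ¬ i < r) = Finset.Ico r ℓ := by
    ext i; simp; omega
  rw [h1, h2, Finset.sum_const, Finset.sum_const, Finset.card_range, Nat.card_Ico]

theorem stmt18 (ℓ n : ℕ) (hl : 0 < ℓ) (hln : ℓ ≤ n) (M : ℤ)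
    (hM : IsGreatest (MSet ℓ n) M) :
    2 * (M - 1) = (n : ℤ) ^ 2
        - ((ℓ : ℤ) - (n % ℓ : ℕ)) * ((n / ℓ : ℕ) : ℤ) ^ 2
        - ((n % ℓ : ℕ) : ℤ) * (((n / ℓ : ℕ) : ℤ) + 1) ^ 2 ∧
      (M : ℚ) = (n : ℚ) ^ 2 * ((ℓ : ℚ) - 1) / (2 * (ℓ : ℚ))
        + (1 / 2) * (((n % ℓ : ℕ) : ℚ) ^ 2 / (ℓ : ℚ) - ((n % ℓ : ℕ) : ℚ))
        + 1 := by
  set q : ℕ := n / ℓ with hqdef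
  set r : ℕ := n % ℓ with hrdef
  have hrl : r < ℓ := Nat.mod_lt n hl
  have hnd : n = ℓ * q + r := (Nat.div_add_mod n ℓ).symm
  set S : ℤ := ((ℓ : ℤ) - r) * (q : ℤ) ^ 2 + (r : ℤ) * ((q : ℤ) + 1) ^ 2 with hSdef
  have hndZ : (n : ℤ) = (ℓ : ℤ) * q + r := by exact_mod_cast congrArg (Nat.cast : ℕ → ℤ) hnd
  -- lower bound on sum of squares
  have key : ∀ k : Fin ℓ → ℕ, (∑ i, k i) = n → S ≤ ∑ i, ((k i : ℤ)) ^ 2 := by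
    intro k hk
    have hks : (∑ i, ((k i : ℤ))) = (n : ℤ) := by exact_mod_cast congrArg (Nat.cast : ℕ → ℤ) hk
    have h2 : ∑ i, (((k i : ℤ)) - q) ≤ ∑ i, (((k i : ℤ)) - q) ^ 2 := by
      apply Finset.sum_le_sum
      intro i _
      set x : ℤ := ((k i : ℤ)) - q
      nlinarith [sq_nonneg x, sq_nonneg (x - 1), Int.add_mul_emod_self_left]
    have e1 : ∑ i, (((k i : ℤ)) - q) ^ 2
        = (∑ i, ((k i : ℤ)) ^ 2) - 2 * (q : ℤ) * n + (ℓ : ℤ) * (q : ℤ) ^ 2 := by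
      have : ∀ i : Fin ℓ, (((k i : ℤ)) - q) ^ 2
          = ((k i : ℤ)) ^ 2 - 2 * (q : ℤ) * (k i : ℤ) + (q : ℤ) ^ 2 := by intro i; ring
      rw [Finset.sum_congr rfl (fun i _ => this i)]
      rw [Finset.sum_add_distrib, Finset.sum_sub_distrib, ← Finset.mul_sum, hks,
        Finset.sum_const, Finset.card_univ, Fintype.card_fin, nsmul_eq_mul]
    have e2 : ∑ i, (((k i : ℤ)) - q) = (n : ℤ) - (ℓ : ℤ) * q := by
      rw [Finset.sum_sub_distrib, hks, Finset.sum_const, Finset.card_univ,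
        Fintype.card_fin, nsmul_eq_mul]
    have : (∑ i, ((k i : ℤ)) ^ 2) - S
        = (∑ i, (((k i : ℤ)) - q) ^ 2) - (∑ i, (((k i : ℤ)) - q)) := by
      rw [e1, e2, hSdef]
      linear_combination (2 * (q : ℤ) + 1) * hndZ
    linarith
  -- witness tuple
  set kw : Fin ℓ → ℕ := fun i => if (i : ℕ) < r then q + 1 else q with hkw
  have hsum : (∑ i, kw i) = n := by
    refine (Fin.sum_univ_eq_sum_range (fun j => if j < r then q + 1 else q) ℓ).trans ?_
    rw [sum_split r ℓ hrl.le, smul_eq_mul, smul_eq_mul]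
    have hs : r * (q + 1) + (ℓ - r) * q = ℓ * q + r := by
      obtain ⟨c, hc⟩ := Nat.exists_eq_add_of_le hrl.le
      rw [hc, Nat.add_sub_cancel_left]
      ring
    rw [hs, ← hnd]
  have hsq : (∑ i, ((kw i : ℤ)) ^ 2) = S := by
    have : ∀ i : Fin ℓ, ((kw i : ℤ)) ^ 2
        = if (i : ℕ) < r then ((q : ℤ) + 1) ^ 2 else (q : ℤ) ^ 2 := by
      intro i
      rw [hkw]
      by_cases h : (i : ℕ) < r <;> simp [h] <;> push_cast <;> ring
    rw [Finset.sum_congr rfl (fun i _ => this i)]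
    refine (Fin.sum_univ_eq_sum_range (fun j => if j < r then ((q : ℤ) + 1) ^ 2 else (q : ℤ) ^ 2) ℓ).trans ?_
    rw [sum_split r ℓ hrl.le, hSdef, nsmul_eq_mul, nsmul_eq_mul]
    have hcast : ((ℓ - r : ℕ) : ℤ) = (ℓ : ℤ) - r := by
      have := hrl.le; push_cast [this]; ring
    rw [hcast]; ring
  -- evenness
  have heven : Even ((n : ℤ) ^ 2 - S) := by
    rw [← hsq]
    have h1 : Even ((n : ℤ) ^ 2 - n) := by
      rcases Int.even_or_odd (n : ℤ) with h | h
      · rcases h with ⟨c, hc⟩; exact ⟨c * n - c, by rw [hc]; ring⟩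
      · rcases h with ⟨c, hc⟩; exact ⟨2 * c ^ 2 + c, by rw [hc]; ring⟩
    have h2 : Even ((∑ i, ((kw i : ℤ))) - ∑ i, ((kw i : ℤ)) ^ 2) := by
      rw [← Finset.sum_sub_distrib]
      apply Finset.even_sum
      intro i _
      rcases Int.even_or_odd ((kw i : ℤ)) with h | h
      · rcases h with ⟨c, hc⟩; exact ⟨c - 2 * c ^ 2, by rw [hc]; ring⟩
      · rcases h with ⟨c, hc⟩; exact ⟨-c - 2 * c ^ 2, by rw [hc]; ring⟩
    have hks : (∑ i, ((kw i : ℤ))) = (n : ℤ) :=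
      by exact_mod_cast congrArg (Nat.cast : ℕ → ℤ) hsum
    rcases h1 with ⟨a, ha⟩; rcases h2 with ⟨b, hb⟩
    exact ⟨a + b, by rw [← hks] at ha ⊢; linarith⟩
  rcases heven with ⟨c, hc⟩
  have hvmem : (c + 1) ∈ MSet ℓ n := by
    refine ⟨kw, hsum, ?_⟩
    rw [hsq]; linarith
  have hvle : c + 1 ≤ M := hM.2 hvmem
  rcases hM.1 with ⟨k', hk', hMeq⟩
  have hle : 2 * (M - 1) ≤ (n : ℤ) ^ 2 - S := by
    have := key k' hk'
    linarith [hMeq]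
  have hMv : M = c + 1 := by omega
  have goal1 : 2 * (M - 1) = (n : ℤ) ^ 2
      - ((ℓ : ℤ) - (r : ℕ)) * ((q : ℕ) : ℤ) ^ 2
      - ((r : ℕ) : ℤ) * (((q : ℕ) : ℤ) + 1) ^ 2 := by
    rw [hMv]; rw [hSdef] at hc; linarith
  refine ⟨goal1, ?_⟩
  have hlQ : ((ℓ : ℚ)) ≠ 0 := by positivity
  have h1Q : 2 * ((M : ℚ) - 1) = (n : ℚ) ^ 2
      - ((ℓ : ℚ) - (r : ℚ)) * (q : ℚ) ^ 2 - (r : ℚ) * ((q : ℚ) + 1) ^ 2 := by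
    exact_mod_cast congrArg (Int.cast : ℤ → ℚ) goal1
  have hndQ : (n : ℚ) = (ℓ : ℚ) * q + r := by exact_mod_cast congrArg (Nat.cast : ℕ → ℚ) hnd
  field_simp
  linear_combination (ℓ : ℚ) * h1Q + ((n : ℚ) + (ℓ : ℚ) * q + r) * hndQ
end
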